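/- arXiv:0806.0041 — 2 statements merged into one kernel-verified Lean document; each statement's English description precedes it below -/
import Mathlib

section
/- Let ρ, σ : A → B be parallel ring homomorphisms, R = Hom(ρ,ρ) and S = Hom(σ,σ) the intertwiner endomorphism rings (subrings of B), and V = Hom(σ,ρ) the (R,S)-bimodule with actions given by multiplication in B. If ρ ≤ σ, then the map sending r ∈ R to the operator of left multiplication by r on V is a ring isomorphism from R onto the ring of right-S-module endomorphisms of V. -/
open MulOpposite

/-- `t` is an intertwiner from the ring homomorphism `α` to the ring homomorphism `β`. -/
def IsIntertwiner {A B : Type*} [Ring A] [Ring B] (α β : A →+* B) (t : B) : Prop :=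
  ∀ a : A, t * α a = β a * t

/-- `ρ ≤ σ` for parallel ring homomorphisms: there is a direct summand diagram. -/
def RingHomLE {A B : Type*} [Ring A] [Ring B] (ρ σ : A →+* B) : Prop :=
  ∃ (n : ℕ) (b a : Fin n → B),
    (∀ i, IsIntertwiner ρ σ (b i)) ∧ (∀ i, IsIntertwiner σ ρ (a i)) ∧
    (∑ i, a i * b i) = 1

variable {A B : Type*} [Ring A] [Ring B]

/-- The additive group `Hom(α,β)` of intertwiners from `α` to `β`, as an additive
subgroup of `B`. -/
def IntwGrp (α β : A →+* B) : AddSubgroup B where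
  carrier := {t | IsIntertwiner α β t}
  add_mem' := by
    intro x y hx hy a
    simp only [add_mul, mul_add, hx a, hy a]
  zero_mem' := by intro a; simp
  neg_mem' := by
    intro x hx a
    simp only [neg_mul, mul_neg, hx a]

theorem mem_IntwGrp {α β : A →+* B} {t : B} :
    t ∈ IntwGrp α β ↔ IsIntertwiner α β t := Iff.rfl

/-- The intertwiner endomorphism ring `Hom(σ,σ)` as a subring of `B`. -/
def EndSubring (σ : A →+* B) : Subring B where
  carrier := {t | IsIntertwiner σ σ t}
  mul_mem' := by
    intro x y hx hy a
    rw [mul_assoc, hy a, ← mul_assoc, hx a, mul_assoc]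
  one_mem' := by intro a; rw [one_mul, mul_one]
  add_mem' := by
    intro x y hx hy a
    simp only [add_mul, mul_add, hx a, hy a]
  zero_mem' := by intro a; simp
  neg_mem' := by
    intro x hx a
    simp only [neg_mul, mul_neg, hx a]

theorem mem_EndSubring {σ : A →+* B} {t : B} :
    t ∈ EndSubring σ ↔ IsIntertwiner σ σ t := Iff.rfl

/-- `V = Hom(σ,ρ)` is a right module (i.e. a module over the opposite ring) over
`S = Hom(σ,σ)`, by multiplication in `B`. -/
instance (σ ρ : A →+* B) : SMul (EndSubring σ)ᵐᵒᵖ (IntwGrp σ ρ) :=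
  ⟨fun s v => ⟨(v : B) * (s.unop : B), by
    intro a
    rw [mul_assoc, (s.unop).2 a, ← mul_assoc, v.2 a, mul_assoc]⟩⟩

theorem opSmul_def (σ ρ : A →+* B) (s : (EndSubring σ)ᵐᵒᵖ) (v : IntwGrp σ ρ) :
    ((s • v : IntwGrp σ ρ) : B) = (v : B) * (s.unop : B) := rfl

instance (σ ρ : A →+* B) : Module (EndSubring σ)ᵐᵒᵖ (IntwGrp σ ρ) where
  one_smul v := by
    apply Subtype.ext
    simp [opSmul_def]
  mul_smul s t v := by
    apply Subtype.ext
    simp [opSmul_def, mul_assoc]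
  smul_zero s := by
    apply Subtype.ext
    simp [opSmul_def]
  smul_add s v w := by
    apply Subtype.ext
    simp [opSmul_def, add_mul]
  add_smul s t v := by
    apply Subtype.ext
    simp [opSmul_def, mul_add]
  zero_smul v := by
    apply Subtype.ext
    simp [opSmul_def]

/-- `U = Hom(ρ,σ)` is a left module over `S = Hom(σ,σ)`, by multiplication in `B`. -/
instance (σ ρ : A →+* B) : SMul (EndSubring σ) (IntwGrp ρ σ) :=
  ⟨fun s u => ⟨(s : B) * (u : B), by
    intro a
    rw [mul_assoc, u.2 a, ← mul_assoc, s.2 a, mul_assoc]⟩⟩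

theorem smul_def (σ ρ : A →+* B) (s : EndSubring σ) (u : IntwGrp ρ σ) :
    ((s • u : IntwGrp ρ σ) : B) = (s : B) * (u : B) := rfl

instance (σ ρ : A →+* B) : Module (EndSubring σ) (IntwGrp ρ σ) where
  one_smul u := by
    apply Subtype.ext
    simp [smul_def]
  mul_smul s t u := by
    apply Subtype.ext
    simp [smul_def, mul_assoc]
  smul_zero s := by
    apply Subtype.ext
    simp [smul_def]
  smul_add s u w := by
    apply Subtype.ext
    simp [smul_def, mul_add]
  add_smul s t u := by
    apply Subtype.ext
    simp [smul_def, add_mul]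
  zero_smul u := by
    apply Subtype.ext
    simp [smul_def]

/-!
Write `R = Hom(ρ,ρ)`, `S = Hom(σ,σ)`, `V = Hom(σ,ρ)`, and let `Σ aᵢ bᵢ = 1` be a direct summand
diagram. Every `v ∈ V` decomposes as `v = Σ aᵢ · (bᵢ v)` with `bᵢ v ∈ S`, so the `aᵢ` generate `V`
as a right `S`-module and an `S`-linear `f` is left multiplication by `Σ f(aᵢ) bᵢ ∈ R`.
Conversely `r = Σ (r aᵢ) bᵢ` recovers `r` from its action on the `aᵢ`; so `f ↦ Σ f(aᵢ) bᵢ`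
is a two-sided inverse of left multiplication.
-/

theorem IsIntertwiner.mul {α β γ : A →+* B} {s t : B} (hs : IsIntertwiner β γ s)
    (ht : IsIntertwiner α β t) : IsIntertwiner α γ (s * t) := fun x => by
  rw [mul_assoc, ht x, ← mul_assoc, hs x, mul_assoc]

def leftMul (ρ σ : A →+* B) : EndSubring ρ →+* Module.End (EndSubring σ)ᵐᵒᵖ (IntwGrp σ ρ) where
  toFun r :=
    { toFun := fun v => ⟨r * v, IsIntertwiner.mul r.2 v.2⟩
      map_add' := fun _ _ => Subtype.ext (mul_add _ _ _)
      map_smul' := fun _ _ => Subtype.ext (mul_assoc _ _ _).symm }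
  map_one' := LinearMap.ext fun _ => Subtype.ext (one_mul _)
  map_mul' _ _ := LinearMap.ext fun _ => Subtype.ext (mul_assoc _ _ _)
  map_zero' := LinearMap.ext fun _ => Subtype.ext (zero_mul _)
  map_add' _ _ := LinearMap.ext fun _ => Subtype.ext (add_mul _ _ _)

@[simp]
theorem coe_leftMul_apply (ρ σ : A →+* B) (r : EndSubring ρ) (v : IntwGrp σ ρ) :
    ((leftMul ρ σ r v : IntwGrp σ ρ) : B) = r * v := rfl

section DirectSummand

variable {ρ σ : A →+* B} {n : ℕ} {a b : Fin n → B}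
  (ha : ∀ i, IsIntertwiner σ ρ (a i)) (hb : ∀ i, IsIntertwiner ρ σ (b i))

def leftMulInvFun (f : Module.End (EndSubring σ)ᵐᵒᵖ (IntwGrp σ ρ)) : EndSubring ρ :=
  ⟨∑ i, f ⟨a i, ha i⟩ * b i,
    Subring.sum_mem _ fun i _ => IsIntertwiner.mul (f ⟨a i, ha i⟩).2 (hb i)⟩

variable (hab : ∑ i, a i * b i = 1)
include hab

theorem leftMulInvFun_leftMul :
    Function.LeftInverse (leftMulInvFun ha hb) (leftMul ρ σ) := fun r => by
  apply Subtype.ext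
  calc ∑ i, (r : B) * a i * b i = r * ∑ i, a i * b i := by
        simp only [Finset.mul_sum, mul_assoc]
    _ = r := by rw [hab, mul_one]

theorem sum_op_smul_eq_self (v : IntwGrp σ ρ) :
    ∑ i, op (⟨b i * v, IsIntertwiner.mul (hb i) v.2⟩ : EndSubring σ) •
      (⟨a i, ha i⟩ : IntwGrp σ ρ) = v := by
  apply Subtype.ext
  simp only [AddSubgroup.val_finsetSum, opSmul_def, unop_op]
  calc ∑ i, a i * (b i * v) = (∑ i, a i * b i) * v := by
        simp only [Finset.sum_mul, mul_assoc]
    _ = v := by rw [hab, one_mul]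

theorem leftMul_leftMulInvFun :
    Function.RightInverse (leftMulInvFun ha hb) (leftMul ρ σ) := fun f => by
  ext v
  conv_rhs => rw [← sum_op_smul_eq_self ha hb hab v, map_sum]
  simp only [map_smul, coe_leftMul_apply, leftMulInvFun, AddSubgroup.val_finsetSum, opSmul_def,
    unop_op, Finset.sum_mul, mul_assoc]

end DirectSummand

/-- If `ρ ≤ σ` then the map sending `r ∈ R = Hom(ρ,ρ)` to left multiplication by `r`
on `V = Hom(σ,ρ)` is a ring isomorphism from `R` onto the ring of right-`S`-module
endomorphisms of `V`, where `S = Hom(σ,σ)`. -/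
theorem stmt_5 (ρ σ : A →+* B) (h : RingHomLE ρ σ) :
    ∃ φ : EndSubring ρ ≃+* Module.End (EndSubring σ)ᵐᵒᵖ (IntwGrp σ ρ),
      ∀ (r : EndSubring ρ) (v : IntwGrp σ ρ),
        ((φ r v : IntwGrp σ ρ) : B) = (r : B) * (v : B) := by
  obtain ⟨n, b, a, hb, ha, hab⟩ := h
  refine ⟨RingEquiv.ofBijective (leftMul ρ σ) ⟨?_, ?_⟩, fun _ _ => rfl⟩
  · exact (leftMulInvFun_leftMul ha hb hab).injective
  · exact (leftMul_leftMulInvFun ha hb hab).surjective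
end

section
/- Let B be a ring and σ a ring endomorphism of B which is a monoid in the preorder of ring endomorphisms, i.e. σ∘σ ≤ σ and id_B ≤ σ. Then for every ring endomorphism α of B one has α ≤ σ if and only if σ∘α ≤ σ. -/
/-!
The preorder `≤` on ring homomorphisms `A → B` is transitive (compose the direct summand
diagrams) and compatible with composition on either side. If `α ≤ σ`, then
`σ ∘ α ≤ σ ∘ σ ≤ σ`; conversely, if `σ ∘ α ≤ σ`, then `α = id ∘ α ≤ σ ∘ α ≤ σ`.
-/

namespace IsIntertwiner

variable {A B C : Type*} [Ring A] [Ring B] [Ring C]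

theorem mul_s18 {ρ τ μ : A →+* B} {t s : B} (ht : IsIntertwiner ρ τ t) (hs : IsIntertwiner τ μ s) :
    IsIntertwiner ρ μ (s * t) := fun x => by
  rw [mul_assoc, ht x, ← mul_assoc, hs x, mul_assoc]

theorem map (σ : B →+* C) {ρ τ : A →+* B} {t : B} (ht : IsIntertwiner ρ τ t) :
    IsIntertwiner (σ.comp ρ) (σ.comp τ) (σ t) := fun x => by
  simp only [RingHom.comp_apply, ← map_mul, ht x]

theorem comp {ρ τ : B →+* C} {t : C} (ht : IsIntertwiner ρ τ t) (γ : A →+* B) :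
    IsIntertwiner (ρ.comp γ) (τ.comp γ) t := fun x => ht (γ x)

end IsIntertwiner

namespace RingHomLE

variable {A B C : Type*} [Ring A] [Ring B] [Ring C]

theorem of_fintype {ρ τ : A →+* B} {ι : Type*} [Fintype ι] (b a : ι → B)
    (hb : ∀ i, IsIntertwiner ρ τ (b i)) (ha : ∀ i, IsIntertwiner τ ρ (a i))
    (hab : ∑ i, a i * b i = 1) : RingHomLE ρ τ := by
  let e := Fintype.equivFin ι
  refine ⟨Fintype.card ι, b ∘ e.symm, a ∘ e.symm, fun i => hb _, fun i => ha _, ?_⟩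
  rw [← hab, ← e.symm.sum_comp]
  rfl

theorem trans {ρ τ μ : A →+* B} (h : RingHomLE ρ τ) (h' : RingHomLE τ μ) : RingHomLE ρ μ := by
  obtain ⟨n, b, a, hb, ha, hab⟩ := h
  obtain ⟨m, b', a', hb', ha', hab'⟩ := h'
  refine of_fintype (ι := Fin n × Fin m) (fun k => b' k.2 * b k.1) (fun k => a k.1 * a' k.2)
    (fun k => (hb k.1).mul_s18 (hb' k.2)) (fun k => (ha' k.2).mul_s18 (ha k.1)) ?_
  calc ∑ k : Fin n × Fin m, a k.1 * a' k.2 * (b' k.2 * b k.1)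
      = ∑ i, a i * (∑ j, a' j * b' j) * b i := by
        simp only [Fintype.sum_prod_type, Finset.mul_sum, Finset.sum_mul, mul_assoc]
    _ = 1 := by simp only [hab', mul_one, hab]

theorem map (σ : B →+* C) {ρ τ : A →+* B} (h : RingHomLE ρ τ) :
    RingHomLE (σ.comp ρ) (σ.comp τ) := by
  obtain ⟨n, b, a, hb, ha, hab⟩ := h
  refine ⟨n, fun i => σ (b i), fun i => σ (a i), fun i => (hb i).map σ, fun i => (ha i).map σ, ?_⟩
  simp only [← map_mul, ← map_sum, hab, map_one]

theorem comp {ρ τ : B →+* C} (h : RingHomLE ρ τ) (γ : A →+* B) :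
    RingHomLE (ρ.comp γ) (τ.comp γ) := by
  obtain ⟨n, b, a, hb, ha, hab⟩ := h
  exact ⟨n, b, a, fun i => (hb i).comp γ, fun i => (ha i).comp γ, hab⟩

end RingHomLE

/-- If `σ` is a monoid in the preorder of ring endomorphisms of `B`
(`σ∘σ ≤ σ` and `id ≤ σ`), then for every ring endomorphism `α` of `B` one has
`α ≤ σ` iff `σ∘α ≤ σ`. -/
theorem stmt_18 {B : Type*} [Ring B] (σ : B →+* B)
    (h₁ : RingHomLE (σ.comp σ) σ) (h₂ : RingHomLE (RingHom.id B) σ)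
    (α : B →+* B) :
    RingHomLE α σ ↔ RingHomLE (σ.comp α) σ := by
  refine ⟨fun h => (h.map σ).trans h₁, fun h => ?_⟩
  simpa only [RingHom.id_comp] using (h₂.comp α).trans h
end
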